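/- arXiv:2502.17042 — 2 statements merged into one kernel-verified Lean document; each statement's English description precedes it below -/
import Mathlib

section
/- Let Z be a metric space, let Z̃ ⊆ Z be a nonempty compact region of interest, and let D_I = {z̃_1, …, z̃_M} ⊆ Z be a finite anchor set whose fill distance with respect to Z̃ is at most ε > 0. Let κ be a strictly positive definite kernel on Z and let S be a finite nonempty set of pairwise-distinct points of Z. If the space-filling cost V(S) = (1/M)·Σ_{i=1}^{M} Var(z̃_i ; S) equals 0, then every anchor point z̃_i belongs to S and the fill distance of S with respect to Z̃ is at most ε (i.e., S has the ε-space-filling property with respect to Z̃). -/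
open Matrix
open scoped Classical

/-- A strictly positive definite kernel: every Gram matrix built from pairwise-distinct
points is positive definite. -/
def IsStrictlyPDKernel {Z : Type*} (κ : Z → Z → ℝ) : Prop :=
  ∀ (n : ℕ) (z : Fin n → Z), Function.Injective z →
    (Matrix.of fun i j => κ (z i) (z j)).PosDef

/-- GP posterior variance at a query point `zq`, given the (pairwise-distinct) data points
in the finite set `S`: `κ(z̃,z̃) − k K⁻¹ kᵀ` with `K` the Gram matrix of `S` and `k` the
vector of kernel evaluations between `zq` and the points of `S`. -/
noncomputable def postVar {Z : Type*} (κ : Z → Z → ℝ) (S : Finset Z) (zq : Z) : ℝ :=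
  κ zq zq -
    (fun i : S => κ zq (i : Z)) ⬝ᵥ
      ((Matrix.of fun i j : S => κ (i : Z) (j : Z))⁻¹ *ᵥ fun i : S => κ zq (i : Z))

/-- Fill distance of a finite set `D` with respect to the region of interest `Zt`:
`ρ(D) = sup_{ς ∈ Zt} min_{z ∈ D} dist(ς, z)`. -/
noncomputable def fillDist {Z : Type*} [MetricSpace Z] (Zt : Set Z) (D : Finset Z) : ℝ :=
  ⨆ ς : Zt, ⨅ z : D, dist (ς : Z) (z : Z)

/-!
`Var(z̃ ; S)` is the Schur complement of the Gram matrix of `S` in the Gram matrix of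
`S ∪ {z̃}`. For `z̃ ∉ S` the latter is positive definite, hence so is the Schur complement and
`Var(z̃ ; S) > 0`; for `z̃ ∈ S` the kernel vector is a column of the Gram matrix and
`Var(z̃ ; S) = 0`. A vanishing average of these nonnegative variances therefore puts every
anchor into `S`, and enlarging a point set can only decrease its fill distance.
-/

theorem Matrix.PosDef.schurComplement₁₁_of_fromBlocks {m n K : Type*} [Fintype m] [Fintype n]
    [DecidableEq m] [Field K] [PartialOrder K] [StarRing K] [StarOrderedRing K]
    {A : Matrix m m K} {B : Matrix m n K} {D : Matrix n n K}
    (h : (fromBlocks A B Bᴴ D).PosDef) : (D - Bᴴ * A⁻¹ * B).PosDef := by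
  have hA : A.PosDef := by
    convert h.submatrix (e := Sum.inl) Sum.inl_injective using 1
    ext i j
    simp
  have : Invertible A := hA.isUnit.invertible
  refine PosDef.of_dotProduct_mulVec_pos ((PosDef.fromBlocks₁₁ B D hA).mp h.posSemidef).1
    fun y hy => ?_
  have hne : (-((A⁻¹ * B) *ᵥ y) ⊕ᵥ y) ≠ 0 := fun h0 =>
    hy (funext fun j => congrFun h0 (.inr j))
  have := h.dotProduct_mulVec_pos hne
  rwa [dotProduct_mulVec, schur_complement_eq₁₁ B D _ _ hA.1, neg_add_cancel, dotProduct_zero,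
    zero_add, ← dotProduct_mulVec] at this

theorem fillDist_anti {Z : Type*} [MetricSpace Z] {Zt : Set Z} (hZt : Bornology.IsBounded Zt)
    {D E : Finset Z} (hD : D.Nonempty) (hDE : D ⊆ E) : fillDist Zt E ≤ fillDist Zt D := by
  obtain ⟨a, ha⟩ := hD
  obtain ⟨r, hr⟩ := hZt.subset_closedBall a
  have hbdd (ς : Z) (F : Finset Z) : BddBelow (Set.range fun z : F => dist ς z) :=
    ⟨0, by rintro _ ⟨_, rfl⟩; exact dist_nonneg⟩
  have : Nonempty D := ⟨⟨a, ha⟩⟩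
  refine ciSup_mono ⟨r, ?_⟩ fun ς => le_ciInf fun z => ciInf_le (hbdd _ _) ⟨z, hDE z.2⟩
  rintro _ ⟨ς, rfl⟩
  exact (ciInf_le (hbdd _ _) ⟨a, ha⟩).trans (hr ς.2)

namespace IsStrictlyPDKernel

variable {Z : Type*} {κ : Z → Z → ℝ}

theorem posDef_gram (hκ : IsStrictlyPDKernel κ) {ι : Type*} [Fintype ι] {z : ι → Z}
    (hz : Function.Injective z) : (of fun i j => κ (z i) (z j)).PosDef := by
  let e := Fintype.equivFin ι
  convert (hκ _ _ (hz.comp e.symm.injective)).submatrix e.injective using 1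
  ext i j
  simp

theorem symm (hκ : IsStrictlyPDKernel κ) (a b : Z) : κ a b = κ b a := by
  obtain rfl | hab := eq_or_ne a b
  · rfl
  have hinj : Function.Injective ![a, b] := by
    intro i j hij
    fin_cases i <;> fin_cases j <;> simp_all [eq_comm]
  simpa using congrFun₂ (hκ 2 ![a, b] hinj).isHermitian 1 0

end IsStrictlyPDKernel

section

variable {Z : Type*} {κ : Z → Z → ℝ}

theorem postVar_of_mem (hκ : IsStrictlyPDKernel κ) {S : Finset Z} {zq : Z} (h : zq ∈ S) :
    postVar κ S zq = 0 := by
  set K : Matrix S S ℝ := of fun i j : S => κ i j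
  have hK : IsUnit K.det :=
    (isUnit_iff_isUnit_det K).mp (hκ.posDef_gram Subtype.coe_injective).isUnit
  have hk : (fun i : S => κ zq i) = K *ᵥ Pi.single ⟨zq, h⟩ 1 := by
    ext i
    simp [K, mulVec_single, hκ.symm zq]
  rw [postVar, hk, mulVec_mulVec, nonsing_inv_mul K hK, one_mulVec, dotProduct_single]
  simp [K]

theorem postVar_pos_of_notMem (hκ : IsStrictlyPDKernel κ) {S : Finset Z} {zq : Z} (h : zq ∉ S) :
    0 < postVar κ S zq := by
  set K : Matrix S S ℝ := of fun i j : S => κ i j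
  set k : S → ℝ := fun i => κ zq i
  let f : S ⊕ Unit → Z := Sum.elim (↑) fun _ => zq
  have hf : Function.Injective f := by
    rintro (i | i) (j | j) hij
    · exact congrArg Sum.inl (Subtype.coe_injective hij)
    · exact absurd (show (i : Z) = zq from hij) (ne_of_mem_of_not_mem i.2 h)
    · exact absurd (show zq = j from hij) (ne_of_mem_of_not_mem j.2 h).symm
    · rfl
  have hgram : (of fun i j => κ (f i) (f j)) =
      fromBlocks K (replicateCol Unit k) (replicateCol Unit k)ᴴ (of fun _ _ => κ zq zq) := by
    ext (i | i) (j | j) <;> simp [f, K, k, hκ.symm zq]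
  have := (hgram ▸ hκ.posDef_gram hf).schurComplement₁₁_of_fromBlocks.diag_pos (i := ())
  refine this.trans_eq ?_
  rw [conjTranspose_replicateCol, Matrix.mul_assoc, ← replicateCol_mulVec, Matrix.sub_apply,
    replicateRow_mul_replicateCol_apply, star_trivial]
  rfl

theorem postVar_nonneg (hκ : IsStrictlyPDKernel κ) (S : Finset Z) (zq : Z) :
    0 ≤ postVar κ S zq := by
  by_cases h : zq ∈ S
  · exact (postVar_of_mem hκ h).ge
  · exact (postVar_pos_of_notMem hκ h).le

end

theorem statement1_general {Z : Type*} [MetricSpace Z]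
    (Zt : Set Z) (hZt_cpt : IsCompact Zt)
    {M : ℕ} (hM : 0 < M) (anchors : Fin M → Z)
    (ε : ℝ)
    (hfill : fillDist Zt (Finset.image anchors Finset.univ) ≤ ε)
    (κ : Z → Z → ℝ) (hκ : IsStrictlyPDKernel κ)
    (S : Finset Z)
    (hcost : (1 / (M : ℝ)) * ∑ i, postVar κ S (anchors i) = 0) :
    (∀ i, anchors i ∈ S) ∧ fillDist Zt S ≤ ε := by
  have hsum : ∑ i, postVar κ S (anchors i) = 0 := by simpa [hM.ne'] using hcost
  have hmem (i : Fin M) : anchors i ∈ S := by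
    by_contra hi
    refine (postVar_pos_of_notMem hκ hi).ne' ?_
    exact (Finset.sum_eq_zero_iff_of_nonneg fun j _ => postVar_nonneg hκ S _).mp hsum i
      (Finset.mem_univ i)
  have : Nonempty (Fin M) := Fin.pos_iff_nonempty.mp hM
  refine ⟨hmem, (fillDist_anti hZt_cpt.isBounded ?_ ?_).trans hfill⟩
  · exact Finset.univ_nonempty.image anchors
  · exact Finset.image_subset_iff.mpr fun i _ => hmem i

/-- If the space-filling cost `V(S) = (1/M)·Σᵢ Var(z̃ᵢ ; S)` of a finite
nonempty set `S` vanishes, where the anchors have fill distance at most `ε` w.r.t. the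
nonempty compact region of interest, then every anchor point belongs to `S` and `S` has
the `ε`-space-filling property w.r.t. the region of interest. -/
theorem statement1 {Z : Type*} [MetricSpace Z]
    (Zt : Set Z) (hZt_ne : Zt.Nonempty) (hZt_cpt : IsCompact Zt)
    {M : ℕ} (hM : 0 < M) (anchors : Fin M → Z)
    (ε : ℝ) (hε : 0 < ε)
    (hfill : fillDist Zt (Finset.image anchors Finset.univ) ≤ ε)
    (κ : Z → Z → ℝ) (hκ : IsStrictlyPDKernel κ)
    (S : Finset Z) (hS : S.Nonempty)
    (hcost : (1 / (M : ℝ)) * ∑ i, postVar κ S (anchors i) = 0) :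
    (∀ i, anchors i ∈ S) ∧ fillDist Zt S ≤ ε :=
  statement1_general Zt hZt_cpt hM anchors ε hfill κ hκ S hcost
end

section
/- Let X and U be nonempty sets and let f : X → U → X define the discrete-time system x(k+1) = f(x(k), u(k)). Suppose the system is T_d-controllable for some positive integer T_d. Then for any initial state x₀ ∈ X and any M joint anchor points (x̃_1, ũ_1), …, (x̃_M, ũ_M) ∈ X × U, there exist N ≤ M·(T_d + 1) and an input sequence u : {0,…,N−1} → U such that the trajectory x(0) = x₀, x(j+1) = f(x(j), u(j)) satisfies: for every i ∈ {1,…,M} there is some j ∈ {0,…,N−1} with (x(j), u(j)) = (x̃_i, ũ_i). That is, all M anchor joint input-state points are visited by the generated dataset within N ≤ M·(T_d + 1) time steps. -/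
/-
Induction on the number of anchors. By controllability, from the current state the first
anchor state `x̃₁` is reached within `T ≤ T_d` steps; applying `ũ₁` there visits `(x̃₁, ũ₁)`
at time `T`, after `T + 1 ≤ T_d + 1` steps, and the remaining `M - 1` anchors are visited by
the input sequence obtained inductively from the state `f x̃₁ ũ₁`, appended after time `T + 1`.
-/

/-- Trajectory of the discrete-time system `x(k+1) = f(x(k), u(k))` starting at `x0`. -/
def traj {X U : Type*} (f : X → U → X) (x0 : X) (u : ℕ → U) : ℕ → X
  | 0 => x0
  | k + 1 => f (traj f x0 u k) (u k)

/-- `Td`-controllability: any state can be driven to any other state in at most `Td`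
(and at least one) steps by a suitable input sequence. -/
def Controllable {X U : Type*} (f : X → U → X) (Td : ℕ) : Prop :=
  ∀ x1 x2 : X, ∃ T : ℕ, 1 ≤ T ∧ T ≤ Td ∧ ∃ u : ℕ → U, traj f x1 u T = x2

def splice {U : Type*} (u v : ℕ → U) (n : ℕ) : ℕ → U :=
  fun k => if k < n then u k else v (k - n)

section Splice

variable {U : Type*}

lemma splice_of_lt (u v : ℕ → U) {n k : ℕ} (hk : k < n) : splice u v n k = u k :=
  if_pos hk

lemma splice_add (u v : ℕ → U) (n k : ℕ) : splice u v n (n + k) = v k := by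
  simp [splice]

end Splice

section Trajectory

variable {X U : Type*} (f : X → U → X)

lemma traj_congr (x0 : X) {u v : ℕ → U} {k : ℕ} (h : ∀ j < k, u j = v j) :
    traj f x0 u k = traj f x0 v k := by
  induction k with
  | zero => rfl
  | succ n ih =>
    simp only [traj, ih fun j hj => h j (Nat.lt_succ_of_lt hj), h n (Nat.lt_succ_self n)]

lemma traj_add (x0 : X) (u : ℕ → U) (a b : ℕ) :
    traj f x0 u (a + b) = traj f (traj f x0 u a) (fun k => u (a + k)) b := by
  induction b with
  | zero => rfl
  | succ n ih => rw [← Nat.add_assoc, traj, traj, ih]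

lemma traj_splice_of_le (x0 : X) (u v : ℕ → U) {n k : ℕ} (hk : k ≤ n) :
    traj f x0 (splice u v n) k = traj f x0 u k :=
  traj_congr f x0 fun _ hj => splice_of_lt u v (lt_of_lt_of_le hj hk)

lemma traj_splice_add (x0 : X) (u v : ℕ → U) (n k : ℕ) :
    traj f x0 (splice u v n) (n + k) = traj f (traj f x0 u n) v k := by
  rw [traj_add, traj_splice_of_le f x0 u v le_rfl]
  exact traj_congr f _ fun j _ => splice_add u v n j

lemma Controllable.exists_visit {Td : ℕ} (hctrl : Controllable f Td) (x0 : X) (p : X × U) :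
    ∃ T ≤ Td, ∃ u : ℕ → U, (traj f x0 u T, u T) = p := by
  obtain ⟨T, -, hT, u, hu⟩ := hctrl x0 p.1
  refine ⟨T, hT, Function.update u T p.2, ?_⟩
  have hprefix : traj f x0 (Function.update u T p.2) T = traj f x0 u T :=
    traj_congr f x0 fun j hj => Function.update_of_ne hj.ne _ _
  rw [hprefix, hu, Function.update_self]

end Trajectory

theorem statement9_general {X U : Type*} [Nonempty U]
    (f : X → U → X) (Td : ℕ) (hctrl : Controllable f Td)
    (x0 : X) {M : ℕ} (anchors : Fin M → X × U) :
    ∃ N : ℕ, N ≤ M * (Td + 1) ∧ ∃ u : ℕ → U,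
      ∀ i : Fin M, ∃ j < N, (traj f x0 u j, u j) = anchors i := by
  induction M generalizing x0 with
  | zero => exact ⟨0, Nat.zero_le _, Classical.arbitrary _, fun i => i.elim0⟩
  | succ M ih =>
    obtain ⟨T, hT, u, hu⟩ := hctrl.exists_visit f x0 (anchors 0)
    obtain ⟨N, hN, v, hv⟩ := ih (traj f x0 u (T + 1)) (fun i => anchors i.succ)
    refine ⟨T + 1 + N, by rw [Nat.succ_mul]; omega, splice u v (T + 1), Fin.cases ?_ ?_⟩
    · refine ⟨T, by omega, ?_⟩
      rwa [traj_splice_of_le f x0 u v T.le_succ, splice_of_lt u v T.lt_succ_self]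
    · intro i
      obtain ⟨j, hj, hji⟩ := hv i
      exact ⟨T + 1 + j, by omega, by rwa [traj_splice_add, splice_add]⟩

/-- For a `Td`-controllable system, any initial state and any `M` joint
anchor points `(x̃ᵢ, ũᵢ)`, there exist `N ≤ M·(Td+1)` and an input sequence whose
trajectory visits all `M` anchor joint input-state points within the first `N` steps. -/
theorem statement9 {X U : Type*} [Nonempty X] [Nonempty U]
    (f : X → U → X) (Td : ℕ) (hTd : 0 < Td) (hctrl : Controllable f Td)
    (x0 : X) {M : ℕ} (anchors : Fin M → X × U) :
    ∃ N : ℕ, N ≤ M * (Td + 1) ∧ ∃ u : ℕ → U,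
      ∀ i : Fin M, ∃ j < N, (traj f x0 u j, u j) = anchors i :=
  statement9_general f Td hctrl x0 anchors
end
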